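/- If the directed graph G is a single strongly connected component containing a vertex of out-degree at least two, then the translation flow ψ on Δ has sensitive dependence on initial conditions with sensitivity constant δ = 1/2: for every x ∈ Δ and ε > 0 there exist y ∈ Δ with d(x,y) < ε and t > 0 with d(ψ_t(x), ψ_t(y)) > 1/2. -/

import Mathlib

open scoped Classical
open MeasureTheory

/-- The set of bi-infinite admissible paths in the directed graph with edge relation `E`. -/
def OmegaPaths {V : Type*} (E : V → V → Prop) : Set (ℤ → V) :=
  {u | ∀ i : ℤ, E (u i) (u (i + 1))}

/-- The space `Δ`. -/
def DeltaSpace {V : Type*} (E : V → V → Prop) (h : ℝ) : Set (ℝ → V) :=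
  {x | ∃ u ∈ OmegaPaths E, ∃ τ : ℝ, x = fun t => u ⌊(t + τ) / h⌋}

/-- The metric in integral form. -/
noncomputable def dInt {V : Type*} (h : ℝ) (x y : ℝ → V) : ℝ :=
  (1 / h) * ∫ t : ℝ, (1 / 4 ^ (⌊t / h⌋.natAbs) : ℝ) * (if x t = y t then (0 : ℝ) else 1)

/-- The translation flow. -/
def psiFlow {V : Type*} (t : ℝ) (x : ℝ → V) : ℝ → V := fun s => x (s + t)

/-!
Write `x(t) = u ⌊(t + τ)/h⌋`. The weight `4^{-|⌊t/h⌋|}` is integrable, so its tail beyond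
`N h - τ` is small for large `N`; hence replacing `u` from index `N` on moves `x` by less
than `ε`.
Since every vertex reaches a vertex with two distinct successors, `u N` has two different
forward continuations, and one of them leaves `u` at some index `n ≥ N`. Translating by the
time that brings block `n` to `[0, h)`, where the weight is `1`, makes the distance at least `1`.
-/

open Real Set Filter Topology

theorem integrable_exp_neg_mul_abs {b : ℝ} (hb : 0 < b) :
    Integrable fun x : ℝ => exp (-b * |x|) := by
  rw [← integrableOn_univ, ← Iic_union_Ioi (a := 0), integrableOn_union]
  constructor
  · refine (integrableOn_exp_mul_Iic hb 0).congr_fun (fun x hx => ?_) measurableSet_Iic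
    rw [abs_of_nonpos hx, neg_mul_neg]
  · refine (exp_neg_integrableOn_Ioi 0 hb).congr_fun (fun x hx => ?_) measurableSet_Ioi
    rw [abs_of_pos hx]

section Weight

noncomputable def dWeight (h t : ℝ) : ℝ := 1 / 4 ^ ⌊t / h⌋.natAbs

variable {h : ℝ}

theorem dWeight_nonneg (t : ℝ) : 0 ≤ dWeight h t := by unfold dWeight; positivity

theorem dWeight_of_mem_Ico {t : ℝ} (hh : 0 < h) (ht : t ∈ Ico 0 h) : dWeight h t = 1 := by
  have : ⌊t / h⌋ = 0 :=
    Int.floor_eq_zero_iff.2 ⟨div_nonneg ht.1 hh.le, (div_lt_one hh).2 ht.2⟩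
  simp [dWeight, this]

theorem measurable_dWeight : Measurable (dWeight h) :=
  (measurable_of_countable fun n : ℤ => (1 / 4 ^ n.natAbs : ℝ)).comp
    (measurable_id.div_const h).floor

theorem dWeight_le_exp (hh : 0 < h) (t : ℝ) :
    dWeight h t ≤ 4 * exp (-(log 4 / h) * |t|) := by
  have hlog : 0 < log 4 := log_pos (by norm_num)
  have hfloor : |t / h| ≤ (⌊t / h⌋.natAbs : ℝ) + 1 := by
    rw [Nat.cast_natAbs, Int.cast_abs]
    have := abs_sub_abs_le_abs_sub (t / h) ⌊t / h⌋
    rw [← Int.fract, abs_of_nonneg (Int.fract_nonneg (t / h))] at this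
    linarith [Int.fract_lt_one (t / h)]
  calc dWeight h t = exp (-(⌊t / h⌋.natAbs * log 4)) := by
        rw [dWeight, exp_neg, exp_nat_mul, exp_log (by norm_num), one_div]
    _ ≤ exp (log 4 + -(log 4 * |t / h|)) := exp_le_exp.2 (by nlinarith)
    _ = 4 * exp (-(log 4 / h) * |t|) := by
        rw [exp_add, exp_log (by norm_num), abs_div, abs_of_pos hh]
        ring_nf

theorem integrable_dWeight (hh : 0 < h) : Integrable (dWeight h) := by
  have hexp := integrable_exp_neg_mul_abs (div_pos (log_pos (by norm_num : (1 : ℝ) < 4)) hh)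
  refine (hexp.const_mul 4).mono' measurable_dWeight.aestronglyMeasurable (ae_of_all _ fun t => ?_)
  rw [norm_of_nonneg (dWeight_nonneg t)]
  exact dWeight_le_exp hh t

theorem dInt_eq_setIntegral {V : Type*} {x y : ℝ → V} (hxy : MeasurableSet {t | x t ≠ y t}) :
    dInt h x y = 1 / h * ∫ t in {t | x t ≠ y t}, dWeight h t := by
  rw [dInt, ← integral_indicator hxy]
  congr 2 with t
  by_cases hxyt : x t = y t <;> simp [hxyt, dWeight]

end Weight

section StepPath

variable {V : Type*} {h : ℝ}

noncomputable def stepPath (h : ℝ) (u : ℤ → V) (τ : ℝ) : ℝ → V := fun t => u ⌊(t + τ) / h⌋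

theorem psiFlow_stepPath (t : ℝ) (u : ℤ → V) (τ : ℝ) :
    psiFlow t (stepPath h u τ) = stepPath h u (t + τ) := by
  funext s
  simp only [psiFlow, stepPath, add_assoc]

theorem measurableSet_stepPath_ne (u w : ℤ → V) (τ : ℝ) :
    MeasurableSet {t | stepPath h u τ t ≠ stepPath h w τ t} :=
  ((measurable_id.add_const τ).div_const h).floor
    (MeasurableSet.of_discrete (s := {n | u n ≠ w n}))

theorem dInt_stepPath_le (hh : 0 < h) {u w : ℤ → V} {N : ℤ} (hagree : ∀ i < N, u i = w i)
    (τ : ℝ) :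
    dInt h (stepPath h u τ) (stepPath h w τ) ≤
      1 / h * ∫ t in Ioi (N * h - τ), dWeight h t := by
  rw [dInt_eq_setIntegral (measurableSet_stepPath_ne u w τ), ← integral_Ici_eq_integral_Ioi]
  refine mul_le_mul_of_nonneg_left (setIntegral_mono_set (integrable_dWeight hh).integrableOn
    (ae_of_all _ dWeight_nonneg) (LE.le.eventuallyLE fun t ht => ?_)) (by positivity)
  have hN : N ≤ ⌊(t + τ) / h⌋ := not_lt.1 fun hlt => ht (hagree _ hlt)
  rw [Int.le_floor, le_div_iff₀ hh] at hN
  exact sub_le_iff_le_add.2 hN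

theorem one_le_dInt_stepPath (hh : 0 < h) {u w : ℤ → V} {n : ℤ} (hne : u n ≠ w n) :
    1 ≤ dInt h (stepPath h u (n * h)) (stepPath h w (n * h)) := by
  have hblock : Ico 0 h ⊆ {t | stepPath h u (n * h) t ≠ stepPath h w (n * h) t} := by
    intro t ht
    have : ⌊(t + n * h) / h⌋ = n := by
      rw [add_div, mul_div_cancel_right₀ _ hh.ne', Int.floor_add_intCast,
        Int.floor_eq_zero_iff.2 ⟨div_nonneg ht.1 hh.le, (div_lt_one hh).2 ht.2⟩, zero_add]
    simpa [stepPath, this] using hne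
  calc 1 = 1 / h * ∫ t in Ico 0 h, dWeight h t := by
        rw [setIntegral_congr_fun measurableSet_Ico fun t ht => dWeight_of_mem_Ico hh ht]
        simp [hh.le, hh.ne']
    _ ≤ _ := by
        rw [dInt_eq_setIntegral (measurableSet_stepPath_ne u w _)]
        exact mul_le_mul_of_nonneg_left
          (setIntegral_mono_set (integrable_dWeight hh).integrableOn
            (ae_of_all _ dWeight_nonneg) (LE.le.eventuallyLE hblock)) (by positivity)

end StepPath

section Paths

variable {V : Type*} {E : V → V → Prop}

def forwardPaths (E : V → V → Prop) (p : V) : Set (ℕ → V) :=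
  {g | g 0 = p ∧ ∀ j, E (g j) (g (j + 1))}

theorem cons_mem_forwardPaths {p q : V} {g : ℕ → V} (hpq : E p q)
    (hg : g ∈ forwardPaths E q) : Stream'.cons p g ∈ forwardPaths E p :=
  ⟨rfl, fun
    | 0 => show E p (g 0) from hg.1 ▸ hpq
    | j + 1 => hg.2 j⟩

theorem forwardPaths_nonempty (hsucc : ∀ p, ∃ q, E p q) (p : V) :
    (forwardPaths E p).Nonempty := by
  choose next hnext using hsucc
  exact ⟨fun j => next^[j] p, rfl, fun j => by
    simpa only [Function.iterate_succ_apply'] using hnext _⟩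

theorem exists_ne_mem_forwardPaths (hsucc : ∀ p, ∃ q, E p q) {p v a b : V}
    (hpv : Relation.ReflTransGen E p v) (hva : E v a) (hvb : E v b) (hab : a ≠ b) :
    ∃ g₁ ∈ forwardPaths E p, ∃ g₂ ∈ forwardPaths E p, g₁ ≠ g₂ := by
  induction hpv using Relation.ReflTransGen.head_induction_on with
  | refl =>
    obtain ⟨g₁, hg₁⟩ := forwardPaths_nonempty hsucc a
    obtain ⟨g₂, hg₂⟩ := forwardPaths_nonempty hsucc b
    refine ⟨_, cons_mem_forwardPaths hva hg₁, _, cons_mem_forwardPaths hvb hg₂,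
      fun heq => hab ?_⟩
    rw [← hg₁.1, ← hg₂.1]
    exact congr_fun heq 1
  | head hpq _ ih =>
    obtain ⟨g₁, hg₁, g₂, hg₂, hne⟩ := ih
    exact ⟨_, cons_mem_forwardPaths hpq hg₁, _, cons_mem_forwardPaths hpq hg₂,
      fun heq => hne (funext fun j => congr_fun heq (j + 1))⟩

def splicePath (u : ℤ → V) (N : ℤ) (g : ℕ → V) : ℤ → V :=
  fun i => if i < N then u i else g (i - N).toNat

theorem splicePath_of_lt {u : ℤ → V} {N i : ℤ} (g : ℕ → V) (hi : i < N) :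
    splicePath u N g i = u i :=
  if_pos hi

theorem splicePath_add_natCast (u : ℤ → V) (N : ℤ) (g : ℕ → V) (j : ℕ) :
    splicePath u N g (N + j) = g j := by
  simp [splicePath]

theorem splicePath_mem_omegaPaths {u : ℤ → V} (hu : u ∈ OmegaPaths E) {N : ℤ} {g : ℕ → V}
    (hg : g ∈ forwardPaths E (u N)) : splicePath u N g ∈ OmegaPaths E := by
  intro i
  rcases lt_or_ge i N with hi | hi
  · rw [splicePath_of_lt g hi]
    rcases (Int.add_one_le_iff.2 hi).lt_or_eq with hi' | rfl
    · rw [splicePath_of_lt g hi']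
      exact hu i
    · have hN := splicePath_add_natCast u (i + 1) g 0
      rw [Nat.cast_zero, add_zero] at hN
      rw [hN, hg.1]
      exact hu i
  · obtain ⟨j, rfl⟩ := Int.le.dest hi
    have hsucc := splicePath_add_natCast u N g (j + 1)
    rw [Nat.cast_succ, ← add_assoc] at hsucc
    rw [splicePath_add_natCast, hsucc]
    exact hg.2 j

theorem exists_rel_of_reflTransGen {p v a : V} (hpv : Relation.ReflTransGen E p v)
    (hva : E v a) : ∃ q, E p q := by
  rcases hpv.cases_head with rfl | ⟨q, hpq, -⟩
  · exact ⟨a, hva⟩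
  · exact ⟨q, hpq⟩

theorem exists_mem_forwardPaths_ne (hsc : ∀ a b : V, Relation.ReflTransGen E a b)
    (hdeg : ∃ v a b : V, a ≠ b ∧ E v a ∧ E v b) (p : V) (s : ℕ → V) :
    ∃ g ∈ forwardPaths E p, g ≠ s := by
  obtain ⟨v, a, b, hab, hva, hvb⟩ := hdeg
  obtain ⟨g₁, hg₁, g₂, hg₂, hne⟩ := exists_ne_mem_forwardPaths
    (fun q => exists_rel_of_reflTransGen (hsc q v) hva) (hsc p v) hva hvb hab
  by_cases h₁ : g₁ = s
  · exact ⟨g₂, hg₂, h₁ ▸ hne.symm⟩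
  · exact ⟨g₁, hg₁, h₁⟩

end Paths

theorem sensitive_dependence_general {V : Type*} (E : V → V → Prop) (h : ℝ)
    (hh : 0 < h)
    (hsc : ∀ a b : V, Relation.ReflTransGen E a b)
    (hdeg : ∃ v a b : V, a ≠ b ∧ E v a ∧ E v b) :
    ∀ x ∈ DeltaSpace E h, ∀ ε > (0 : ℝ), ∃ y ∈ DeltaSpace E h,
      dInt h x y < ε ∧ ∃ t > (0 : ℝ), 1 / 2 < dInt h (psiFlow t x) (psiFlow t y) := by
  rintro _ ⟨u, hu, τ, rfl⟩ ε hε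
  have hphase : Tendsto (fun N : ℤ => N * h - τ) atTop atTop :=
    tendsto_atTop_add_const_right _ _ (tendsto_intCast_atTop_atTop.atTop_mul_const hh)
  have htail :
      Tendsto (fun N : ℤ => 1 / h * ∫ t in Ioi (N * h - τ), dWeight h t) atTop (𝓝 0) := by
    simpa using (tendsto_integral_Ioi_zero hphase).const_mul (1 / h)
  obtain ⟨N, hNε, hNpos⟩ :=
    ((htail.eventually (gt_mem_nhds hε)).and (hphase.eventually_gt_atTop 0)).exists
  obtain ⟨g, hg, hgu⟩ := exists_mem_forwardPaths_ne hsc hdeg (u N) fun j => u (N + j)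
  obtain ⟨j, hj⟩ := Function.ne_iff.1 hgu
  refine ⟨stepPath h (splicePath u N g) τ, ⟨_, splicePath_mem_omegaPaths hu hg, τ, rfl⟩,
    (dInt_stepPath_le hh (fun i hi => (splicePath_of_lt g hi).symm) τ).trans_lt hNε,
    (N + j) * h - τ, ?_, ?_⟩
  · have : (N : ℝ) * h ≤ (N + j) * h := by gcongr; exact le_add_of_nonneg_right j.cast_nonneg
    linarith
  · change 1 / 2 <
      dInt h (psiFlow _ (stepPath h u τ)) (psiFlow _ (stepPath h (splicePath u N g) τ))
    rw [psiFlow_stepPath, psiFlow_stepPath, sub_add_cancel, ← Int.cast_natCast, ← Int.cast_add]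
    refine one_half_lt_one.trans_le (one_le_dInt_stepPath hh ?_)
    rw [splicePath_add_natCast]
    exact Ne.symm hj

/-- If `G` is a single strongly connected component with some vertex of out-degree at
least two, then the translation flow on `Δ` has sensitive dependence on initial
conditions with sensitivity constant `1/2`. -/
theorem sensitive_dependence {V : Type*} [Fintype V] (E : V → V → Prop) (h : ℝ)
    (hh : 0 < h)
    (hsc : ∀ a b : V, Relation.ReflTransGen E a b)
    (hdeg : ∃ v a b : V, a ≠ b ∧ E v a ∧ E v b) :
    ∀ x ∈ DeltaSpace E h, ∀ ε > (0 : ℝ), ∃ y ∈ DeltaSpace E h,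
      dInt h x y < ε ∧ ∃ t > (0 : ℝ), 1 / 2 < dInt h (psiFlow t x) (psiFlow t y) :=
  sensitive_dependence_general E h hh hsc hdeg
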